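/- arXiv:2012.14611 — 10 statements merged into one kernel-verified Lean document; each statement's English description precedes it below -/
import Mathlib

section
/- Let P be a partial order, f an order automorphism of P, and x, y ∈ P. Then x ∼_f y if and only if there exist x', x'' with x' ∼_f x and x'' ∼_f x, and y', y'' with y' ∼_f y and y'' ∼_f y, such that x' ≤ y' and y'' ≤ x''. -/
variable {P : Type*} [PartialOrder P]

/-- `x ∼_f y` iff there are `i j : ℤ` with `f^i x ≤ y ≤ f^j x`. -/
def orbRel (f : P ≃o P) (x y : P) : Prop :=
  ∃ i j : ℤ, (f ^ i) x ≤ y ∧ y ≤ (f ^ j) x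

/-!
Split `x ∼_f y` into its two halves "some iterate of `x` lies below `y`" and "some iterate of `y`
lies below `x`". Each half is a preorder containing `≤`, so the two interlacing chains
`x ∼ x' ≤ y' ∼ y` and `y ∼ y'' ≤ x'' ∼ x` yield the two halves of `x ∼_f y`.
-/

def orbLE (f : P ≃o P) (x y : P) : Prop :=
  ∃ i : ℤ, (f ^ i) x ≤ y

section

variable (f : P ≃o P)

lemma zpow_apply_zpow_apply (i j : ℤ) (x : P) : (f ^ i) ((f ^ j) x) = (f ^ (i + j)) x := by
  rw [zpow_add]; rfl

lemma orbLE_of_le {x y : P} (h : x ≤ y) : orbLE f x y :=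
  ⟨0, by simpa using h⟩

lemma orbLE_trans {x y z : P} : orbLE f x y → orbLE f y z → orbLE f x z := by
  rintro ⟨i, hi⟩ ⟨j, hj⟩
  refine ⟨j + i, ?_⟩
  calc (f ^ (j + i)) x = (f ^ j) ((f ^ i) x) := (zpow_apply_zpow_apply f j i x).symm
    _ ≤ (f ^ j) y := (f ^ j).monotone hi
    _ ≤ z := hj

lemma zpow_neg_apply_zpow_apply (i : ℤ) (x : P) : (f ^ (-i)) ((f ^ i) x) = x := by
  rw [zpow_apply_zpow_apply, neg_add_cancel, zpow_zero]; rfl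

lemma le_zpow_apply_iff {x y : P} (j : ℤ) : y ≤ (f ^ j) x ↔ (f ^ (-j)) y ≤ x := by
  rw [← (f ^ (-j)).le_iff_le, zpow_neg_apply_zpow_apply]

lemma orbRel_iff_orbLE_and_orbLE {x y : P} : orbRel f x y ↔ orbLE f x y ∧ orbLE f y x := by
  simp only [orbRel, orbLE, le_zpow_apply_iff, exists_and_left, exists_and_right]
  exact ⟨fun ⟨h, j, hj⟩ => ⟨h, -j, hj⟩, fun ⟨h, j, hj⟩ => ⟨h, -j, by rwa [neg_neg]⟩⟩

lemma orbRel_refl (x : P) : orbRel f x x :=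
  ⟨0, 0, le_rfl, le_rfl⟩

lemma orbRel_zpow_apply_left (i : ℤ) (x : P) : orbRel f ((f ^ i) x) x :=
  ⟨-i, -i, (zpow_neg_apply_zpow_apply f i x).le, (zpow_neg_apply_zpow_apply f i x).ge⟩

end

/-- Interlacing orbitals are equal: `x ∼_f y` iff there are `x', x'' ∼_f x` and
`y', y'' ∼_f y` with `x' ≤ y'` and `y'' ≤ x''`. -/
theorem orbRel_iff_interlacing (f : P ≃o P) (x y : P) :
    orbRel f x y ↔
      ∃ x' x'' y' y'' : P, orbRel f x' x ∧ orbRel f x'' x ∧ orbRel f y' y ∧ orbRel f y'' y ∧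
        x' ≤ y' ∧ y'' ≤ x'' := by
  constructor
  · rintro ⟨i, j, hi, hj⟩
    exact ⟨_, _, y, y, orbRel_zpow_apply_left f i x, orbRel_zpow_apply_left f j x,
      orbRel_refl f y, orbRel_refl f y, hi, hj⟩
  · rintro ⟨x', x'', y', y'', hx', hx'', hy', hy'', hxy, hyx⟩
    simp only [orbRel_iff_orbLE_and_orbLE] at hx' hx'' hy' hy'' ⊢
    exact ⟨orbLE_trans f (orbLE_trans f hx'.2 (orbLE_of_le f hxy)) hy'.1,
      orbLE_trans f (orbLE_trans f hy''.2 (orbLE_of_le f hyx)) hx''.1⟩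
end

section
/- Let P be a partial order, f an order automorphism of P, and x, y ∈ P with x ∼_f y. Then parity(x, f) = parity(y, f). Moreover, if this common parity is 0, then sp(x, f) = sp(y, f). -/
variable {P : Type*} [PartialOrder P]

/-- The spiral length of `x` under `f`: the least `n ≥ 1` such that `x` and `f^n x`
are comparable, and `∞` if no such `n` exists. -/
noncomputable def spiral (f : P ≃o P) (x : P) : ℕ∞ :=
  sInf ((fun m : ℕ => (m : ℕ∞)) ''
    {m : ℕ | 1 ≤ m ∧ (x ≤ (f ^ (m : ℤ)) x ∨ (f ^ (m : ℤ)) x ≤ x)})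

open Classical in
/-- The parity of `x` under `f`: `+1` if `sp(x,f) = n < ∞` and `x < f^n x`, `-1` if
`sp(x,f) = n < ∞` and `f^n x < x`, and `0` otherwise. -/
noncomputable def parity (f : P ≃o P) (x : P) : ℤ :=
  if ∃ n : ℕ, spiral f x = (n : ℕ∞) ∧ x < (f ^ (n : ℤ)) x then 1
  else if ∃ n : ℕ, spiral f x = (n : ℕ∞) ∧ (f ^ (n : ℤ)) x < x then -1
  else 0

/-!
The exponents `k` with `x ≤ f^k x` form an additive submonoid `S x` of `ℤ`, and `x ∼_f y`
makes `S x` and `S y` agree up to a fixed shift `d` in both directions. A submonoid of `ℤ` is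
nonnegative with a positive element (parity `+1`), nonpositive with a negative element
(parity `-1`), or closed under negation, and shifts preserve the first two kinds. In the last
case `x ≤ f^k x` forces `f^k x = x`, so `f^i x ≤ y ≤ f^j x` collapses to `y = f^i x`; parity and
spiral length are invariant under the automorphism `f^i`, which commutes with `f`.
-/

namespace AddSubmonoid

variable {S T : AddSubmonoid ℤ}

theorem int_neg_mem_of_mul_neg {a b : ℤ} (ha : a ∈ S) (hb : b ∈ S) (hab : a * b < 0) :
    -a ∈ S := by
  have hb1 : 1 ≤ b.natAbs := Int.natAbs_pos.2 (by rintro rfl; simp at hab)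
  have key : -a = (b.natAbs - 1 : ℕ) • a + a.natAbs • b := by
    simp only [nsmul_eq_mul, Nat.cast_sub hb1, Int.natCast_natAbs, Nat.cast_one]
    rcases mul_neg_iff.1 hab with ⟨ha0, hb0⟩ | ⟨ha0, hb0⟩
    · rw [abs_of_pos ha0, abs_of_neg hb0]; ring
    · rw [abs_of_neg ha0, abs_of_pos hb0]; ring
  rw [key]
  exact add_mem (nsmul_mem ha _) (nsmul_mem hb _)

theorem int_trichotomy (S : AddSubmonoid ℤ) :
    ((∃ k ∈ S, 0 < k) ∧ ∀ k ∈ S, 0 ≤ k) ∨ ((∃ k ∈ S, k < 0) ∧ ∀ k ∈ S, k ≤ 0) ∨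
      ∀ k ∈ S, -k ∈ S := by
  by_cases hpos : ∃ k ∈ S, 0 < k <;> by_cases hneg : ∃ k ∈ S, k < 0
  · obtain ⟨p, hp, hp0⟩ := hpos
    obtain ⟨n, hn, hn0⟩ := hneg
    refine Or.inr (Or.inr fun k hk => ?_)
    rcases lt_trichotomy k 0 with hk0 | rfl | hk0
    · exact int_neg_mem_of_mul_neg hk hp (by nlinarith)
    · simp
    · exact int_neg_mem_of_mul_neg hk hn (by nlinarith)
  · push Not at hneg
    exact Or.inl ⟨hpos, hneg⟩
  · push Not at hpos
    exact Or.inr (Or.inl ⟨hneg, hpos⟩)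
  · push Not at hpos hneg
    refine Or.inr (Or.inr fun k hk => ?_)
    obtain rfl : k = 0 := le_antisymm (hpos k hk) (hneg k hk)
    simp

theorem int_exists_pos_mem_of_add_mem {d : ℤ} (hST : ∀ k ∈ S, k + d ∈ T)
    (hS : ∃ k ∈ S, 0 < k) : ∃ k ∈ T, 0 < k := by
  obtain ⟨k, hk, hk0⟩ := hS
  refine ⟨(d.natAbs + 1) • k + d, hST _ (nsmul_mem hk _), ?_⟩
  rw [nsmul_eq_mul]
  push_cast
  nlinarith [abs_nonneg d, neg_abs_le d]

theorem int_exists_neg_mem_of_add_mem {d : ℤ} (hST : ∀ k ∈ S, k + d ∈ T)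
    (hS : ∃ k ∈ S, k < 0) : ∃ k ∈ T, k < 0 := by
  obtain ⟨k, hk, hk0⟩ := hS
  refine ⟨(d.natAbs + 1) • k + d, hST _ (nsmul_mem hk _), ?_⟩
  rw [nsmul_eq_mul]
  push_cast
  nlinarith [abs_nonneg d, le_abs_self d]

theorem int_exists_pos_forall_nonneg_of_add_mem {d : ℤ} (hST : ∀ k ∈ S, k + d ∈ T)
    (hTS : ∀ k ∈ T, k + d ∈ S)
    (h : (∃ k ∈ S, 0 < k) ∧ ∀ k ∈ S, 0 ≤ k) : (∃ k ∈ T, 0 < k) ∧ ∀ k ∈ T, 0 ≤ k := by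
  refine ⟨int_exists_pos_mem_of_add_mem hST h.1, fun k hk => ?_⟩
  by_contra! hk0
  obtain ⟨m, hm, hm0⟩ := int_exists_neg_mem_of_add_mem hTS ⟨k, hk, hk0⟩
  exact hm0.not_ge (h.2 m hm)

theorem int_exists_neg_forall_nonpos_of_add_mem {d : ℤ} (hST : ∀ k ∈ S, k + d ∈ T)
    (hTS : ∀ k ∈ T, k + d ∈ S)
    (h : (∃ k ∈ S, k < 0) ∧ ∀ k ∈ S, k ≤ 0) : (∃ k ∈ T, k < 0) ∧ ∀ k ∈ T, k ≤ 0 := by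
  refine ⟨int_exists_neg_mem_of_add_mem hST h.1, fun k hk => ?_⟩
  by_contra! hk0
  obtain ⟨m, hm, hm0⟩ := int_exists_pos_mem_of_add_mem hTS ⟨k, hk, hk0⟩
  exact hm0.not_ge (h.2 m hm)

end AddSubmonoid

section

variable {f : P ≃o P} {x y : P}

variable (f x) in
def upExponents : AddSubmonoid ℤ where
  carrier := {k | x ≤ (f ^ k) x}
  zero_mem' := le_rfl
  add_mem' {a b} ha hb := by
    show x ≤ (f ^ (a + b)) x
    rw [zpow_add, RelIso.mul_apply]
    exact ha.trans ((f ^ a).monotone hb)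

theorem mem_upExponents {k : ℤ} : k ∈ upExponents f x ↔ x ≤ (f ^ k) x := Iff.rfl

theorem zpow_apply_le_zpow_apply_iff {a b : ℤ} :
    (f ^ a) x ≤ (f ^ b) x ↔ b - a ∈ upExponents f x := by
  have hb : (f ^ b) x = (f ^ a) ((f ^ (b - a)) x) := by
    rw [← RelIso.mul_apply, ← zpow_add, add_sub_cancel]
  rw [hb, (f ^ a).le_iff_le, mem_upExponents]

theorem neg_mem_upExponents {k : ℤ} : -k ∈ upExponents f x ↔ (f ^ k) x ≤ x := by
  simpa using (zpow_apply_le_zpow_apply_iff (f := f) (x := x) (a := k) (b := 0)).symm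

theorem add_sub_mem_upExponents {i j k : ℤ} (hi : (f ^ i) x ≤ y) (hj : y ≤ (f ^ j) x)
    (hk : k ∈ upExponents f x) : k + (j - i) ∈ upExponents f y := by
  rw [mem_upExponents]
  calc y ≤ (f ^ j) x := hj
    _ ≤ (f ^ (k + j)) x := zpow_apply_le_zpow_apply_iff.2 (by simpa using hk)
    _ = (f ^ (k + (j - i))) ((f ^ i) x) := by rw [← RelIso.mul_apply, ← zpow_add]; ring_nf
    _ ≤ (f ^ (k + (j - i))) y := (f ^ _).monotone hi

theorem orbRel.exists_add_mem_upExponents (h : orbRel f x y) : ∃ d : ℤ,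
    (∀ k ∈ upExponents f x, k + d ∈ upExponents f y) ∧
      ∀ k ∈ upExponents f y, k + d ∈ upExponents f x := by
  obtain ⟨i, j, hi, hj⟩ := h
  have inv_le (k : ℤ) {a b : P} (hab : a ≤ (f ^ k) b) : (f ^ (-k)) a ≤ b := by
    simpa [zpow_neg] using (f ^ (-k)).monotone hab
  have le_inv (k : ℤ) {a b : P} (hab : (f ^ k) b ≤ a) : b ≤ (f ^ (-k)) a := by
    simpa [zpow_neg] using (f ^ (-k)).monotone hab
  refine ⟨j - i, fun k hk => add_sub_mem_upExponents hi hj hk, fun k hk => ?_⟩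
  simpa [sub_eq_add_neg, add_comm] using add_sub_mem_upExponents (inv_le j hj) (le_inv i hi) hk

theorem exists_spiral_eq (h : ∃ k ∈ upExponents f x, k ≠ 0) : ∃ n : ℕ, spiral f x = n ∧
    0 < n ∧ ((n : ℤ) ∈ upExponents f x ∨ -(n : ℤ) ∈ upExponents f x) := by
  obtain ⟨k, hk, hk0⟩ := h
  have hne : ((fun m : ℕ => (m : ℕ∞)) ''
      {m : ℕ | 1 ≤ m ∧ (x ≤ (f ^ (m : ℤ)) x ∨ (f ^ (m : ℤ)) x ≤ x)}).Nonempty := by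
    refine ⟨_, ⟨k.natAbs, ⟨Int.natAbs_pos.2 hk0, ?_⟩, rfl⟩⟩
    rw [← mem_upExponents, ← neg_mem_upExponents]
    rcases Int.natAbs_eq k with h | h <;> rw [← h]
    · exact Or.inl hk
    · exact Or.inr hk
  obtain ⟨n, ⟨hn1, hn⟩, hspiral⟩ := csInf_mem hne
  exact ⟨n, hspiral.symm, hn1, by rwa [← mem_upExponents, ← neg_mem_upExponents] at hn⟩

theorem parity_eq_one (h : (∃ k ∈ upExponents f x, 0 < k) ∧ ∀ k ∈ upExponents f x, 0 ≤ k) :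
    parity f x = 1 := by
  obtain ⟨k, hk, hk0⟩ := h.1
  obtain ⟨n, hspiral, hn0, hn⟩ := exists_spiral_eq ⟨k, hk, hk0.ne'⟩
  have hneg : -(n : ℤ) ∉ upExponents f x := fun hn' => by linarith [h.2 _ hn']
  have hlt : x < (f ^ (n : ℤ)) x :=
    lt_of_le_not_ge (hn.resolve_right hneg) (mt neg_mem_upExponents.2 hneg)
  rw [parity, if_pos ⟨n, hspiral, hlt⟩]

theorem parity_eq_neg_one (h : (∃ k ∈ upExponents f x, k < 0) ∧ ∀ k ∈ upExponents f x, k ≤ 0) :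
    parity f x = -1 := by
  obtain ⟨k, hk, hk0⟩ := h.1
  obtain ⟨n, hspiral, hn0, hn⟩ := exists_spiral_eq ⟨k, hk, hk0.ne⟩
  have hpos : (n : ℤ) ∉ upExponents f x := fun hn' => by linarith [h.2 _ hn']
  have hlt : (f ^ (n : ℤ)) x < x :=
    lt_of_le_not_ge (neg_mem_upExponents.1 (hn.resolve_left hpos)) hpos
  have not_up : ¬∃ m : ℕ, spiral f x = m ∧ x < (f ^ (m : ℤ)) x := by
    rintro ⟨m, hm, hxm⟩
    obtain rfl : m = n := by exact_mod_cast hm.symm.trans hspiral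
    exact hxm.not_gt hlt
  rw [parity, if_neg not_up, if_pos ⟨n, hspiral, hlt⟩]

theorem eq_zpow_apply_of_forall_neg_mem (h : ∀ k ∈ upExponents f x, -k ∈ upExponents f x)
    {i j : ℤ} (hi : (f ^ i) x ≤ y) (hj : y ≤ (f ^ j) x) : y = (f ^ i) x := by
  have hij : j - i ∈ upExponents f x := zpow_apply_le_zpow_apply_iff.1 (hi.trans hj)
  have hji : (f ^ j) x ≤ (f ^ i) x :=
    zpow_apply_le_zpow_apply_iff.2 (by rw [← neg_sub]; exact h _ hij)
  exact le_antisymm (hj.trans hji) hi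

theorem zpow_apply_apply_of_commute {g : P ≃o P} (hfg : Commute f g) (m : ℤ) :
    (f ^ m) (g x) = g ((f ^ m) x) := by
  rw [← RelIso.mul_apply, (hfg.zpow_left m).eq, RelIso.mul_apply]

theorem spiral_apply_of_commute {g : P ≃o P} (hfg : Commute f g) :
    spiral f (g x) = spiral f x := by
  simp only [spiral, zpow_apply_apply_of_commute hfg, g.le_iff_le]

open Classical in
theorem parity_apply_of_commute {g : P ≃o P} (hfg : Commute f g) :
    parity f (g x) = parity f x := by
  simp only [parity, spiral_apply_of_commute hfg, zpow_apply_apply_of_commute hfg, g.lt_iff_lt]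

end

/-- Parity is orbital-invariant, and for parity-0 orbitals so is spiral length:
if `x ∼_f y` then `parity(x,f) = parity(y,f)`, and if moreover this common parity is `0`
then `sp(x,f) = sp(y,f)`. -/
theorem parity_orbital_invariant (f : P ≃o P) (x y : P) (hxy : orbRel f x y) :
    parity f x = parity f y ∧ (parity f x = 0 → spiral f x = spiral f y) := by
  obtain ⟨d, hxy', hyx'⟩ := hxy.exists_add_mem_upExponents
  rcases (upExponents f x).int_trichotomy with hx | hx | hx
  · have hy := AddSubmonoid.int_exists_pos_forall_nonneg_of_add_mem hxy' hyx' hx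
    rw [parity_eq_one hx, parity_eq_one hy]
    simp
  · have hy := AddSubmonoid.int_exists_neg_forall_nonpos_of_add_mem hxy' hyx' hx
    rw [parity_eq_neg_one hx, parity_eq_neg_one hy]
    simp
  · obtain ⟨i, j, hi, hj⟩ := hxy
    obtain rfl := eq_zpow_apply_of_forall_neg_mem hx hi hj
    have hfi := Commute.self_zpow f i
    exact ⟨(parity_apply_of_commute hfi).symm, fun _ => (spiral_apply_of_commute hfi).symm⟩
end

section
/- Let P be a partial order, f an order automorphism of P, and x ∈ P with parity σ ∈ {−1, +1} and spiral length n = sp(x, f) < ∞. Then for all y ∈ P and all i : ℤ: if x ≤ f^i(y) then x ≤ f^{i+σn}(y), and if y ≤ f^i(x) then y ≤ f^{i+σn}(x). Consequently, the sequences i ↦ (x ≤ f^i(y)) and i ↦ (y ≤ f^i(x)) are eventually periodic with period n on both sides. -/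
/-!
If `x` has parity `σ = ±1` and spiral length `n`, then `x < f^{σn}(x)`, so applying `f^i` and
composing with `x ≤ f^i(y)` (resp. `y ≤ f^i(x)`) pushes the relation forward by `σn`. Hence along
every residue class mod `n` each of the two sequences switches value at most once, and with only
`n` residue classes the switches are confined to a finite set of indices.
-/

variable {P : Type*} [PartialOrder P]

open Filter

section EventuallyPeriodic

variable {S : ℤ → Prop} {n : ℕ}

theorem imp_of_imp_add_of_dvd (hn : 0 < n) (step : ∀ i, S i → S (i + n)) {i j : ℤ}
    (hij : i ≤ j) (hdvd : (n : ℤ) ∣ j - i) (hi : S i) : S j := by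
  have step_mul : ∀ k : ℕ, S (i + n * k) := fun k => by
    induction k with
    | zero => simpa using hi
    | succ k ih => simpa [mul_add, add_assoc] using step _ ih
  obtain ⟨k, hk⟩ := hdvd
  have hnk : 0 ≤ (n : ℤ) * k := hk ▸ sub_nonneg.2 hij
  lift k to ℕ using nonneg_of_mul_nonneg_right hnk (by exact_mod_cast hn)
  simpa [← hk] using step_mul k

theorem finite_setOf_not_and_add (hn : 0 < n) (step : ∀ i, S i → S (i + n)) :
    {i | ¬S i ∧ S (i + n)}.Finite := by
  have : NeZero n := NeZero.of_pos hn
  refine Set.Finite.of_injOn (f := fun i : ℤ => (i : ZMod n)) (Set.mapsTo_univ _ _) ?_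
    Set.finite_univ
  intro i hi j hj hij
  wlog hle : i ≤ j generalizing i j
  · exact (this hj hi hij.symm (le_of_not_ge hle)).symm
  have hdvd : (n : ℤ) ∣ j - i := (ZMod.intCast_eq_intCast_iff_dvd_sub i j n).1 hij
  by_contra hne
  have hlt : i + n ≤ j := by
    have := Int.le_of_dvd (by omega) hdvd
    omega
  have hdvd' : (n : ℤ) ∣ j - (i + n) := by
    rw [← sub_sub]
    exact dvd_sub hdvd dvd_rfl
  exact hj.1 (imp_of_imp_add_of_dvd hn step hlt hdvd' hi.2)

theorem eventually_periodic_of_imp_add (hn : 0 < n) (step : ∀ i, S i → S (i + n)) :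
    (∀ᶠ i in atTop, S i ↔ S (i + n)) ∧ ∀ᶠ i in atBot, S i ↔ S (i - n) := by
  have hB := (finite_setOf_not_and_add hn step).eventually_cofinite_notMem
  constructor
  · filter_upwards [atTop_le_cofinite hB] with i hi
    exact ⟨step i, fun h => by_contra fun hS => hi ⟨hS, h⟩⟩
  · filter_upwards [(tendsto_atBot_add_const_right _ (-(n : ℤ)) tendsto_id).eventually
      (atBot_le_cofinite hB)] with i hi
    rw [← sub_eq_add_neg] at hi
    exact ⟨fun h => by_contra fun hS => hi ⟨hS, by simpa using h⟩,
      fun h => by simpa using step _ h⟩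

theorem eventually_periodic_of_imp_add_sign_mul {σ : ℤ} (hσ : σ = 1 ∨ σ = -1) (hn : 0 < n)
    (step : ∀ i, S i → S (i + σ * n)) :
    (∀ᶠ i in atTop, S i ↔ S (i + n)) ∧ ∀ᶠ i in atBot, S i ↔ S (i - n) := by
  rcases hσ with rfl | rfl
  · exact eventually_periodic_of_imp_add hn (by simpa using step)
  · -- a backward step for `S` is a forward step for `¬S`
    have hneg := eventually_periodic_of_imp_add (S := fun i => ¬S i) hn
      fun i hi hS => hi (by simpa using step _ hS)
    exact ⟨hneg.1.mono fun _ => not_iff_not.1, hneg.2.mono fun _ => not_iff_not.1⟩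

end EventuallyPeriodic

section OrderIso

variable {α : Type*} [Preorder α] {f : α ≃o α} {x : α} {k : ℤ}

theorem le_zpow_add_apply_of_le_zpow_apply (hx : x ≤ (f ^ k) x) {y : α} {i : ℤ}
    (h : x ≤ (f ^ i) y) : x ≤ (f ^ (i + k)) y := by
  rw [add_comm, zpow_add, RelIso.mul_apply]
  exact hx.trans ((f ^ k).monotone h)

theorem le_zpow_add_apply_self_of_le_zpow_apply_self (hx : x ≤ (f ^ k) x) {y : α} {i : ℤ}
    (h : y ≤ (f ^ i) x) : y ≤ (f ^ (i + k)) x := by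
  rw [zpow_add, RelIso.mul_apply]
  exact h.trans ((f ^ i).monotone hx)

end OrderIso

section Parity

variable {f : P ≃o P} {x : P} {n : ℕ}

theorem lt_zpow_apply_of_parity_eq_one (h : parity f x = 1) (hsp : spiral f x = n) :
    x < (f ^ (n : ℤ)) x := by
  unfold parity at h
  split_ifs at h with h₁ <;> norm_num at h
  obtain ⟨m, hm, hlt⟩ := h₁
  obtain rfl : m = n := by exact_mod_cast hm.symm.trans hsp
  exact hlt

theorem zpow_apply_lt_of_parity_eq_neg_one (h : parity f x = -1) (hsp : spiral f x = n) :
    (f ^ (n : ℤ)) x < x := by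
  unfold parity at h
  split_ifs at h with h₁ h₂
  obtain ⟨m, hm, hlt⟩ := h₂
  obtain rfl : m = n := by exact_mod_cast hm.symm.trans hsp
  exact hlt

theorem lt_zpow_sign_mul_apply_of_parity_eq {σ : ℤ} (hσ : σ = 1 ∨ σ = -1)
    (hpar : parity f x = σ) (hsp : spiral f x = n) : x < (f ^ (σ * n)) x := by
  rcases hσ with rfl | rfl
  · simpa using lt_zpow_apply_of_parity_eq_one hpar hsp
  · have := (f ^ (-(n : ℤ))).strictMono (zpow_apply_lt_of_parity_eq_neg_one hpar hsp)
    rw [neg_one_mul]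
    rwa [← RelIso.mul_apply, ← zpow_add, neg_add_cancel, zpow_zero, RelIso.one_apply] at this

end Parity

/-- Let `x` have parity `σ ∈ {−1, +1}` and finite spiral length `n`. Then for all `y` and
`i : ℤ`: `x ≤ f^i y → x ≤ f^{i+σn} y` and `y ≤ f^i x → y ≤ f^{i+σn} x`; consequently, the
sequences `i ↦ (x ≤ f^i y)` and `i ↦ (y ≤ f^i x)` are eventually `n`-periodic on both
sides. -/
theorem b_seq_eventually_periodic (f : P ≃o P) (x : P) (σ : ℤ) (hσ : σ = 1 ∨ σ = -1)
    (hpar : parity f x = σ) (n : ℕ) (hsp : spiral f x = (n : ℕ∞)) :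
    (∀ (y : P) (i : ℤ),
      (x ≤ (f ^ i) y → x ≤ (f ^ (i + σ * n)) y) ∧
      (y ≤ (f ^ i) x → y ≤ (f ^ (i + σ * n)) x)) ∧
    (∀ y : P, ∃ N : ℤ,
      (∀ i : ℤ, N ≤ i →
        ((x ≤ (f ^ i) y ↔ x ≤ (f ^ (i + n)) y) ∧ (y ≤ (f ^ i) x ↔ y ≤ (f ^ (i + n)) x))) ∧
      (∀ i : ℤ, i ≤ -N →
        ((x ≤ (f ^ i) y ↔ x ≤ (f ^ (i - n)) y) ∧ (y ≤ (f ^ i) x ↔ y ≤ (f ^ (i - n)) x)))) := by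
  have hx := lt_zpow_sign_mul_apply_of_parity_eq hσ hpar hsp
  have hn : 0 < n := Nat.pos_of_ne_zero fun h => by simp [h] at hx
  have step : ∀ (y : P) (i : ℤ), (x ≤ (f ^ i) y → x ≤ (f ^ (i + σ * n)) y) ∧
      (y ≤ (f ^ i) x → y ≤ (f ^ (i + σ * n)) x) := fun _ _ =>
    ⟨le_zpow_add_apply_of_le_zpow_apply hx.le, le_zpow_add_apply_self_of_le_zpow_apply_self hx.le⟩
  refine ⟨step, fun y => ?_⟩
  obtain ⟨hTop₁, hBot₁⟩ := eventually_periodic_of_imp_add_sign_mul hσ hn fun i => (step y i).1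
  obtain ⟨hTop₂, hBot₂⟩ := eventually_periodic_of_imp_add_sign_mul hσ hn fun i => (step y i).2
  obtain ⟨N₁, hN₁⟩ := eventually_atTop.1 (hTop₁.and hTop₂)
  obtain ⟨N₂, hN₂⟩ := eventually_atBot.1 (hBot₁.and hBot₂)
  exact ⟨max N₁ (-N₂), fun i hi => hN₁ i (le_of_max_le_left hi),
    fun i hi => hN₂ i (by omega)⟩
end

section
/- Let P be a partial order, f and g order automorphisms of P, A ⊆ P an f-invariant subset (f[A] = A), B ⊆ P a g-invariant subset (g[B] = B), and h : A → B a function. Then the following are equivalent: (i) h is an order embedding (for x, y ∈ A, x ≤ y iff h(x) ≤ h(y)) and h(f(x)) = g(h(x)) for all x ∈ A; (ii) for all x, y ∈ A and all i : ℤ, x ≤ f^i(y) iff h(x) ≤ g^i(h(y)); (iii) for all x, y ∈ A and all i ∈ {−1, 0, 1}, x ≤ f^i(y) iff h(x) ≤ g^i(h(y)). In particular, f and g are conjugate in the automorphism group of P if and only if there is a bijection h : P → P satisfying (ii), if and only if there is a bijection h : P → P satisfying (iii). -/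
/-!
The pairs `(a, b)` of automorphisms with `a '' A = A` and `h ∘ a = b ∘ h` on `A` form a subgroup
of `Aut α × Aut β`, so `h` intertwines all iterates `f ^ i` and `g ^ i` as soon as it intertwines
`f` and `g`; an order embedding then carries `x ≤ f ^ i y` to `h x ≤ g ^ i (h y)`. Conversely,
`i = 0` says that `h` is an order embedding, while `i = 1` at `(f y, y)` and `i = -1` at
`(y, f y)` give `h (f y) ≤ g (h y)` and `g (h y) ≤ h (f y)`. Taking `A = univ`, a bijection
satisfying these relations is an order isomorphism conjugating `f` to `g`.
-/

open Set

namespace OrderIso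

variable {α β : Type*}

section LE

variable [LE α] [LE β]

def semiconjOnSubgroup (A : Set α) (h : α → β) : Subgroup ((α ≃o α) × (β ≃o β)) where
  carrier := {p | ⇑p.1 '' A = A ∧ ∀ x ∈ A, h (p.1 x) = p.2 (h x)}
  one_mem' := ⟨image_id A, fun _ _ => rfl⟩
  mul_mem' := by
    rintro ⟨a, b⟩ ⟨a', b'⟩ ⟨ha, hab⟩ ⟨ha', hab'⟩
    refine ⟨by rw [Prod.fst_mul, RelIso.coe_mul, image_comp, ha', ha], fun x hx => ?_⟩
    have hx' : a' x ∈ A := ha'.subset (mem_image_of_mem _ hx)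
    simp only [Prod.fst_mul, Prod.snd_mul, RelIso.mul_apply, hab _ hx', hab' _ hx]
  inv_mem' := by
    rintro ⟨a, b⟩ ⟨ha, hab⟩
    have ha_inv : ⇑a⁻¹ '' A = A := by
      nth_rw 1 [← ha]
      exact a.symm_image_image A
    refine ⟨ha_inv, fun x hx => ?_⟩
    have hx' : a⁻¹ x ∈ A := ha_inv.subset (mem_image_of_mem _ hx)
    simpa using congrArg (⇑b⁻¹) (hab _ hx').symm

variable {f : α ≃o α} {g : β ≃o β} {A : Set α} {h : α → β}

theorem zpow_mem_semiconjOnSubgroup (hA : ⇑f '' A = A)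
    (hc : ∀ x ∈ A, h (f x) = g (h x)) (i : ℤ) : (f ^ i, g ^ i) ∈ semiconjOnSubgroup A h := by
  simpa using zpow_mem (show (f, g) ∈ semiconjOnSubgroup A h from ⟨hA, hc⟩) i

theorem le_zpow_iff_of_semiconjOn (hA : ⇑f '' A = A)
    (hemb : ∀ x ∈ A, ∀ y ∈ A, (x ≤ y ↔ h x ≤ h y)) (hc : ∀ x ∈ A, h (f x) = g (h x)) :
    ∀ x ∈ A, ∀ y ∈ A, ∀ i : ℤ, x ≤ (f ^ i) y ↔ h x ≤ (g ^ i) (h y) := by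
  intro x hx y hy i
  obtain ⟨hAi, hci⟩ := zpow_mem_semiconjOnSubgroup hA hc i
  rw [← hci y hy]
  exact hemb x hx _ (hAi.subset (mem_image_of_mem _ hy))

end LE

theorem semiconjOn_of_le_zpow_iff [Preorder α] [PartialOrder β] {f : α ≃o α} {g : β ≃o β}
    {A : Set α} {h : α → β} (hA : MapsTo f A A)
    (hrel : ∀ x ∈ A, ∀ y ∈ A, ∀ i : ℤ, (i = -1 ∨ i = 0 ∨ i = 1) →
      (x ≤ (f ^ i) y ↔ h x ≤ (g ^ i) (h y))) :
    (∀ x ∈ A, ∀ y ∈ A, (x ≤ y ↔ h x ≤ h y)) ∧ (∀ x ∈ A, h (f x) = g (h x)) := by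
  refine ⟨fun x hx y hy => by simpa using hrel x hx y hy 0 (by simp), fun y hy => ?_⟩
  have hle : h (f y) ≤ g (h y) := by
    simpa using hrel (f y) (hA hy) y hy 1 (by simp)
  have hge : h y ≤ g⁻¹ (h (f y)) := by
    simpa using hrel y hy (f y) (hA hy) (-1) (by simp)
  exact le_antisymm hle (by simpa using g.monotone hge)

theorem tfae_semiconjOn [Preorder α] [PartialOrder β] {f : α ≃o α} {g : β ≃o β} {A : Set α}
    {h : α → β} (hA : ⇑f '' A = A) :
    List.TFAE [(∀ x ∈ A, ∀ y ∈ A, (x ≤ y ↔ h x ≤ h y)) ∧ (∀ x ∈ A, h (f x) = g (h x)),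
      ∀ x ∈ A, ∀ y ∈ A, ∀ i : ℤ, x ≤ (f ^ i) y ↔ h x ≤ (g ^ i) (h y),
      ∀ x ∈ A, ∀ y ∈ A, ∀ i : ℤ, (i = -1 ∨ i = 0 ∨ i = 1) →
        (x ≤ (f ^ i) y ↔ h x ≤ (g ^ i) (h y))] := by
  tfae_have 1 → 2 := fun ⟨hemb, hc⟩ => le_zpow_iff_of_semiconjOn hA hemb hc
  tfae_have 2 → 3 := fun hrel x hx y hy i _ => hrel x hx y hy i
  tfae_have 3 → 1 := semiconjOn_of_le_zpow_iff fun _ hx => hA.subset (mem_image_of_mem f hx)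
  tfae_finish

theorem tfae_exists_conj [Preorder α] [PartialOrder β] (f : α ≃o α) (g : β ≃o β) :
    List.TFAE [∃ k : α ≃o β, ∀ x, k (f x) = g (k x),
      ∃ k : α → β, Function.Bijective k ∧ ∀ x y (i : ℤ), x ≤ (f ^ i) y ↔ k x ≤ (g ^ i) (k y),
      ∃ k : α → β, Function.Bijective k ∧ ∀ x y (i : ℤ), (i = -1 ∨ i = 0 ∨ i = 1) →
        (x ≤ (f ^ i) y ↔ k x ≤ (g ^ i) (k y))] := by
  tfae_have 1 → 2 := fun ⟨k, hk⟩ => ⟨k, k.bijective, fun x y i =>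
    le_zpow_iff_of_semiconjOn (image_univ_of_surjective f.surjective)
      (fun x _ y _ => k.le_iff_le.symm) (fun x _ => hk x) x trivial y trivial i⟩
  tfae_have 2 → 3 := fun ⟨k, hk, hrel⟩ => ⟨k, hk, fun x y i _ => hrel x y i⟩
  tfae_have 3 → 1 := fun ⟨k, hk, hrel⟩ => by
    obtain ⟨hemb, hc⟩ := semiconjOn_of_le_zpow_iff (mapsTo_univ f univ)
      (fun x _ y _ i hi => hrel x y i hi)
    exact ⟨⟨Equiv.ofBijective k hk, (hemb _ trivial _ trivial).symm⟩, fun x => hc x trivial⟩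
  tfae_finish

end OrderIso

variable {P : Type*} [PartialOrder P]

theorem L_embedding_iff_conjugating_general (f g : P ≃o P) (A : Set P)
    (hA : (⇑f) '' A = A) (h : P → P) :
    (((∀ x ∈ A, ∀ y ∈ A, (x ≤ y ↔ h x ≤ h y)) ∧ (∀ x ∈ A, h (f x) = g (h x))) ↔
      (∀ x ∈ A, ∀ y ∈ A, ∀ i : ℤ, x ≤ (f ^ i) y ↔ h x ≤ (g ^ i) (h y))) ∧
    ((∀ x ∈ A, ∀ y ∈ A, ∀ i : ℤ, x ≤ (f ^ i) y ↔ h x ≤ (g ^ i) (h y)) ↔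
      (∀ x ∈ A, ∀ y ∈ A, ∀ i : ℤ, (i = -1 ∨ i = 0 ∨ i = 1) →
        (x ≤ (f ^ i) y ↔ h x ≤ (g ^ i) (h y)))) ∧
    ((∃ k : P ≃o P, ∀ x : P, k (f x) = g (k x)) ↔
      (∃ k : P → P, Function.Bijective k ∧
        ∀ (x y : P) (i : ℤ), x ≤ (f ^ i) y ↔ k x ≤ (g ^ i) (k y))) ∧
    ((∃ k : P ≃o P, ∀ x : P, k (f x) = g (k x)) ↔
      (∃ k : P → P, Function.Bijective k ∧
        ∀ (x y : P) (i : ℤ), (i = -1 ∨ i = 0 ∨ i = 1) →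
          (x ≤ (f ^ i) y ↔ k x ≤ (g ^ i) (k y)))) := by
  have hlocal := OrderIso.tfae_semiconjOn (g := g) (h := h) hA
  have hglobal := OrderIso.tfae_exists_conj f g
  exact ⟨hlocal.out 0 1, hlocal.out 1 2, hglobal.out 0 1, hglobal.out 0 2⟩

/-- The language `L` encodes conjugacy: for `f`-invariant `A`, `g`-invariant `B`, and
`h : A → B`, the following are equivalent: (i) `h` is an order embedding with
`h ∘ f = g ∘ h`; (ii) `h` preserves all relations `x ≤ f^i y` (`i : ℤ`); (iii) `h`
preserves the relations `x ≤ f^i y` for `i ∈ {−1,0,1}`. In particular, `f` and `g` are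
conjugate in `Aut(P)` iff there is a bijection of `P` satisfying (ii), iff there is a
bijection of `P` satisfying (iii). -/
theorem L_embedding_iff_conjugating (f g : P ≃o P) (A B : Set P)
    (hA : (⇑f) '' A = A) (hB : (⇑g) '' B = B) (h : P → P) (hmap : Set.MapsTo h A B) :
    (((∀ x ∈ A, ∀ y ∈ A, (x ≤ y ↔ h x ≤ h y)) ∧ (∀ x ∈ A, h (f x) = g (h x))) ↔
      (∀ x ∈ A, ∀ y ∈ A, ∀ i : ℤ, x ≤ (f ^ i) y ↔ h x ≤ (g ^ i) (h y))) ∧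
    ((∀ x ∈ A, ∀ y ∈ A, ∀ i : ℤ, x ≤ (f ^ i) y ↔ h x ≤ (g ^ i) (h y)) ↔
      (∀ x ∈ A, ∀ y ∈ A, ∀ i : ℤ, (i = -1 ∨ i = 0 ∨ i = 1) →
        (x ≤ (f ^ i) y ↔ h x ≤ (g ^ i) (h y)))) ∧
    ((∃ k : P ≃o P, ∀ x : P, k (f x) = g (k x)) ↔
      (∃ k : P → P, Function.Bijective k ∧
        ∀ (x y : P) (i : ℤ), x ≤ (f ^ i) y ↔ k x ≤ (g ^ i) (k y))) ∧
    ((∃ k : P ≃o P, ∀ x : P, k (f x) = g (k x)) ↔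
      (∃ k : P → P, Function.Bijective k ∧
        ∀ (x y : P) (i : ℤ), (i = -1 ∨ i = 0 ∨ i = 1) →
          (x ≤ (f ^ i) y ↔ k x ≤ (g ^ i) (k y)))) :=
  L_embedding_iff_conjugating_general f g A hA h
end

section
/- Let P be a partial order, f and g order automorphisms of P, A ⊆ P a finite subset, and γ : A → P a map such that for all x, y ∈ A and all i : ℤ, x ≤ f^i(y) iff γ(x) ≤ g^i(γ(y)). Then there exists a unique map h : f^ℤ[A] → P extending γ such that for all u, v ∈ f^ℤ[A] and all i : ℤ, u ≤ f^i(v) iff h(u) ≤ g^i(h(v)); moreover h is injective, its range is g^ℤ[γ[A]], and h(f(u)) = g(h(u)) for all u ∈ f^ℤ[A]. Explicitly, h is given by h(f^i(x)) = g^i(γ(x)) for x ∈ A and i : ℤ, and this is well defined. -/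
/-!
Write `h (f^i x) := g^i (γ x)`. Since `f^i x ≤ f^j y ↔ x ≤ f^(j-i) y`, the hypothesis on `γ`
transfers every comparison `f^i x ≤ f^j y` between points of the orbits to the comparison
`g^i (γ x) ≤ g^j (γ y)`; by antisymmetry `h` is well defined, and it satisfies the
hypothesis on all of `f^ℤ[A]`. Any map `h'` with this property satisfies
`h' (f^i u) = g^i (h' u)`, by comparing `f^i u` with itself and `u` with `f^(-i) (f^i u)`;
this gives the commutation with `f`, `g` and the uniqueness.
-/

variable {P : Type*} [PartialOrder P]

def zpowOrbit (f : P ≃o P) (A : Set P) : Set P :=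
  {u | ∃ i : ℤ, ∃ x ∈ A, (f ^ i) x = u}

def IsPartialLIsom (f g : P ≃o P) (S : Set P) (γ : P → P) : Prop :=
  ∀ x ∈ S, ∀ y ∈ S, ∀ i : ℤ, x ≤ (f ^ i) y ↔ γ x ≤ (g ^ i) (γ y)

noncomputable def orbitExtension (f g : P ≃o P) (A : Set P) (γ : P → P) : P → P :=
  Function.extend (fun p : ℤ × A => (f ^ p.1) p.2) (fun p => (g ^ p.1) (γ p.2)) id

theorem mem_zpowOrbit_of_mem {f : P ≃o P} {A : Set P} {x : P} (hx : x ∈ A) :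
    x ∈ zpowOrbit f A :=
  ⟨0, x, hx, rfl⟩

theorem zpow_apply_mem_zpowOrbit {f : P ≃o P} {A : Set P} {u : P} (hu : u ∈ zpowOrbit f A)
    (i : ℤ) : (f ^ i) u ∈ zpowOrbit f A := by
  obtain ⟨j, x, hx, rfl⟩ := hu
  exact ⟨i + j, x, hx, by rw [zpow_add, RelIso.mul_apply]⟩

theorem OrderIso.zpow_apply_le_zpow_apply_iff (f : P ≃o P) (i j : ℤ) (x y : P) :
    (f ^ i) x ≤ (f ^ j) y ↔ x ≤ (f ^ (j - i)) y := by
  conv_lhs => rw [← add_sub_cancel i j, zpow_add, RelIso.mul_apply]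
  exact (f ^ i).le_iff_le

namespace IsPartialLIsom

variable {f g : P ≃o P} {S : Set P} {γ : P → P}

theorem zpow_apply_le_zpow_apply_iff (hγ : IsPartialLIsom f g S γ) {x y : P} (hx : x ∈ S)
    (hy : y ∈ S) (i j : ℤ) : (f ^ i) x ≤ (f ^ j) y ↔ (g ^ i) (γ x) ≤ (g ^ j) (γ y) := by
  rw [f.zpow_apply_le_zpow_apply_iff, g.zpow_apply_le_zpow_apply_iff]
  exact hγ x hx y hy (j - i)

theorem factorsThrough (hγ : IsPartialLIsom f g S γ) :
    Function.FactorsThrough (fun p : ℤ × S => (g ^ p.1) (γ p.2))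
      (fun p : ℤ × S => (f ^ p.1) p.2) := by
  rintro ⟨i, x, hx⟩ ⟨j, y, hy⟩ hxy
  exact le_antisymm ((hγ.zpow_apply_le_zpow_apply_iff hx hy i j).1 hxy.le)
    ((hγ.zpow_apply_le_zpow_apply_iff hy hx j i).1 hxy.ge)

theorem injOn (hγ : IsPartialLIsom f g S γ) : Set.InjOn γ S := fun u hu v hv huv =>
  le_antisymm ((hγ u hu v hv 0).2 (by simpa using huv.le))
    ((hγ v hv u hu 0).2 (by simpa using huv.ge))

theorem apply_zpow_apply (hγ : IsPartialLIsom f g S γ) {u : P} (hu : u ∈ S)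
    (hfu : ∀ i : ℤ, (f ^ i) u ∈ S) (i : ℤ) : γ ((f ^ i) u) = (g ^ i) (γ u) := by
  refine le_antisymm ((hγ _ (hfu i) u hu i).1 le_rfl) ?_
  have hle : γ u ≤ (g ^ (-i)) (γ ((f ^ i) u)) :=
    (hγ u hu _ (hfu i) (-i)).1 (by rw [zpow_neg, RelIso.inv_apply_self])
  simpa [zpow_neg] using (g ^ i).monotone hle

end IsPartialLIsom

section orbitExtension

variable {f g : P ≃o P} {A : Set P} {γ : P → P}

theorem orbitExtension_zpow_apply (hγ : IsPartialLIsom f g A γ) {x : P} (hx : x ∈ A)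
    (i : ℤ) : orbitExtension f g A γ ((f ^ i) x) = (g ^ i) (γ x) :=
  hγ.factorsThrough.extend_apply id (i, ⟨x, hx⟩)

theorem orbitExtension_apply (hγ : IsPartialLIsom f g A γ) {x : P} (hx : x ∈ A) :
    orbitExtension f g A γ x = γ x := by
  simpa using orbitExtension_zpow_apply hγ hx 0

theorem isPartialLIsom_orbitExtension (hγ : IsPartialLIsom f g A γ) :
    IsPartialLIsom f g (zpowOrbit f A) (orbitExtension f g A γ) := by
  rintro _ ⟨j, x, hx, rfl⟩ _ ⟨k, y, hy, rfl⟩ i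
  rw [orbitExtension_zpow_apply hγ hx, orbitExtension_zpow_apply hγ hy, ← RelIso.mul_apply,
    ← RelIso.mul_apply, ← zpow_add, ← zpow_add]
  exact hγ.zpow_apply_le_zpow_apply_iff hx hy j (i + k)

theorem image_orbitExtension_zpowOrbit (hγ : IsPartialLIsom f g A γ) :
    orbitExtension f g A γ '' zpowOrbit f A = {w | ∃ i : ℤ, ∃ x ∈ A, (g ^ i) (γ x) = w} := by
  ext w
  constructor
  · rintro ⟨_, ⟨i, x, hx, rfl⟩, rfl⟩
    exact ⟨i, x, hx, (orbitExtension_zpow_apply hγ hx i).symm⟩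
  · rintro ⟨i, x, hx, rfl⟩
    exact ⟨(f ^ i) x, ⟨i, x, hx, rfl⟩, orbitExtension_zpow_apply hγ hx i⟩

theorem IsPartialLIsom.eqOn_orbitExtension {h' : P → P} (hγ : IsPartialLIsom f g A γ)
    (hh'A : ∀ x ∈ A, h' x = γ x) (hh' : IsPartialLIsom f g (zpowOrbit f A) h') :
    Set.EqOn h' (orbitExtension f g A γ) (zpowOrbit f A) := by
  rintro _ ⟨i, x, hx, rfl⟩
  have hxO := mem_zpowOrbit_of_mem (f := f) hx
  rw [hh'.apply_zpow_apply hxO (zpow_apply_mem_zpowOrbit hxO), hh'A x hx,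
    orbitExtension_zpow_apply hγ hx]

end orbitExtension

theorem finite_partial_L_isom_extends_general (f g : P ≃o P) (A : Set P)
    (γ : P → P) (hγ : ∀ x ∈ A, ∀ y ∈ A, ∀ i : ℤ, x ≤ (f ^ i) y ↔ γ x ≤ (g ^ i) (γ y)) :
    ∃ h : P → P,
      (∀ x ∈ A, h x = γ x) ∧
      (∀ u ∈ {u : P | ∃ i : ℤ, ∃ x ∈ A, (f ^ i) x = u},
        ∀ v ∈ {u : P | ∃ i : ℤ, ∃ x ∈ A, (f ^ i) x = u},
        ∀ i : ℤ, u ≤ (f ^ i) v ↔ h u ≤ (g ^ i) (h v)) ∧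
      Set.InjOn h {u : P | ∃ i : ℤ, ∃ x ∈ A, (f ^ i) x = u} ∧
      h '' {u : P | ∃ i : ℤ, ∃ x ∈ A, (f ^ i) x = u}
        = {w : P | ∃ i : ℤ, ∃ x ∈ A, (g ^ i) (γ x) = w} ∧
      (∀ u ∈ {u : P | ∃ i : ℤ, ∃ x ∈ A, (f ^ i) x = u}, h (f u) = g (h u)) ∧
      (∀ x ∈ A, ∀ i : ℤ, h ((f ^ i) x) = (g ^ i) (γ x)) ∧
      (∀ h' : P → P, (∀ x ∈ A, h' x = γ x) →
        (∀ u ∈ {u : P | ∃ i : ℤ, ∃ x ∈ A, (f ^ i) x = u},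
          ∀ v ∈ {u : P | ∃ i : ℤ, ∃ x ∈ A, (f ^ i) x = u},
          ∀ i : ℤ, u ≤ (f ^ i) v ↔ h' u ≤ (g ^ i) (h' v)) →
        ∀ u ∈ {u : P | ∃ i : ℤ, ∃ x ∈ A, (f ^ i) x = u}, h' u = h u) := by
  have hγ' : IsPartialLIsom f g A γ := hγ
  have hh := isPartialLIsom_orbitExtension hγ'
  refine ⟨orbitExtension f g A γ, fun x hx => orbitExtension_apply hγ' hx, hh, hh.injOn,
    image_orbitExtension_zpowOrbit hγ', fun u hu => ?_,
    fun x hx => orbitExtension_zpow_apply hγ' hx,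
    fun h' hh'A hh' => hγ'.eqOn_orbitExtension hh'A hh'⟩
  simpa using hh.apply_zpow_apply hu (zpow_apply_mem_zpowOrbit hu) 1

/-- A finite partial `L`-isomorphism extends uniquely to the generated orbits: if `A` is
finite and `γ` satisfies `x ≤ f^i y ↔ γ x ≤ g^i (γ y)` on `A`, then there is a map `h`,
unique on `f^ℤ[A]`, extending `γ`, satisfying the same equivalences on `f^ℤ[A]`,
injective there with image `g^ℤ[γ[A]]`, commuting with `f` and `g`, and explicitly given
by `h (f^i x) = g^i (γ x)`. -/
theorem finite_partial_L_isom_extends (f g : P ≃o P) (A : Set P) (hA : A.Finite)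
    (γ : P → P) (hγ : ∀ x ∈ A, ∀ y ∈ A, ∀ i : ℤ, x ≤ (f ^ i) y ↔ γ x ≤ (g ^ i) (γ y)) :
    ∃ h : P → P,
      (∀ x ∈ A, h x = γ x) ∧
      (∀ u ∈ {u : P | ∃ i : ℤ, ∃ x ∈ A, (f ^ i) x = u},
        ∀ v ∈ {u : P | ∃ i : ℤ, ∃ x ∈ A, (f ^ i) x = u},
        ∀ i : ℤ, u ≤ (f ^ i) v ↔ h u ≤ (g ^ i) (h v)) ∧
      Set.InjOn h {u : P | ∃ i : ℤ, ∃ x ∈ A, (f ^ i) x = u} ∧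
      h '' {u : P | ∃ i : ℤ, ∃ x ∈ A, (f ^ i) x = u}
        = {w : P | ∃ i : ℤ, ∃ x ∈ A, (g ^ i) (γ x) = w} ∧
      (∀ u ∈ {u : P | ∃ i : ℤ, ∃ x ∈ A, (f ^ i) x = u}, h (f u) = g (h u)) ∧
      (∀ x ∈ A, ∀ i : ℤ, h ((f ^ i) x) = (g ^ i) (γ x)) ∧
      (∀ h' : P → P, (∀ x ∈ A, h' x = γ x) →
        (∀ u ∈ {u : P | ∃ i : ℤ, ∃ x ∈ A, (f ^ i) x = u},
          ∀ v ∈ {u : P | ∃ i : ℤ, ∃ x ∈ A, (f ^ i) x = u},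
          ∀ i : ℤ, u ≤ (f ^ i) v ↔ h' u ≤ (g ^ i) (h' v)) →
        ∀ u ∈ {u : P | ∃ i : ℤ, ∃ x ∈ A, (f ^ i) x = u}, h' u = h u) :=
  finite_partial_L_isom_extends_general f g A γ hγ
end

section
/- Let P be a partial order, f an order automorphism of P, and x, y ∈ P with ¬(x ≤ y). Suppose that either (i) there exists c ∈ P with f(c) = c, c < x, and c incomparable to y, or (ii) there exists d ∈ P with f(d) = d, y < d, and d incomparable to x. Then ¬(f^n(x) ≤ y) for every n : ℤ (so there are no x' ∼_f x and y' ∼_f y with x' ≤ y'). -/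
variable {P : Type*} [PartialOrder P]

/-! A fixed point of `f` is fixed by every iterate `f^n`, and `f^n` is an order automorphism.
So a fixed point below `x` but not below `y` stays below every `f^n x`, and a fixed point above
`y` but not above `x` would lie above `x` if it lay above some `f^n x`. -/

namespace OrderIso

theorem zpow_apply_eq_self {f : P ≃o P} {c : P} (hc : f c = c) (n : ℤ) : (f ^ n) c = c :=
  zpow_mem (show f ∈ MulAction.stabilizer (P ≃o P) c from hc) n

theorem zpow_apply_zpow_apply (f : P ≃o P) (a b : ℤ) (x : P) :
    (f ^ a) ((f ^ b) x) = (f ^ (a + b)) x := by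
  rw [zpow_add, RelIso.mul_apply]

end OrderIso

section

variable {f : P ≃o P} {x y : P}

theorem not_zpow_apply_le_of_fixed_le {c : P} (hc : f c = c) (hcx : c ≤ x) (hcy : ¬ c ≤ y)
    (n : ℤ) : ¬ (f ^ n) x ≤ y := fun h =>
  hcy <| calc
    c = (f ^ n) c := (OrderIso.zpow_apply_eq_self hc n).symm
    _ ≤ (f ^ n) x := (f ^ n).monotone hcx
    _ ≤ y := h

theorem not_zpow_apply_le_of_le_fixed {d : P} (hd : f d = d) (hyd : y ≤ d) (hxd : ¬ x ≤ d)
    (n : ℤ) : ¬ (f ^ n) x ≤ y := fun h =>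
  hxd <| (f ^ n).le_iff_le.mp <| calc
    (f ^ n) x ≤ y := h
    _ ≤ d := hyd
    _ = (f ^ n) d := (OrderIso.zpow_apply_eq_self hd n).symm

theorem exists_zpow_apply_le_of_orbRel {x' y' : P} (hx : orbRel f x' x) (hy : orbRel f y' y)
    (h : x' ≤ y') : ∃ n : ℤ, (f ^ n) x ≤ y := by
  obtain ⟨-, j, -, hxj⟩ := hx
  obtain ⟨i, -, hyi, -⟩ := hy
  refine ⟨i - j, ?_⟩
  calc (f ^ (i - j)) x ≤ (f ^ (i - j)) ((f ^ j) y') :=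
        (f ^ (i - j)).monotone (hxj.trans ((f ^ j).monotone h))
    _ = (f ^ i) y' := by rw [OrderIso.zpow_apply_zpow_apply, sub_add_cancel]
    _ ≤ y := hyi

end

theorem fixed_point_prevents_weakLe_general (f : P ≃o P) (x y : P)
    (hfix : (∃ c : P, f c = c ∧ c < x ∧ ¬ c ≤ y ∧ ¬ y ≤ c) ∨
            (∃ d : P, f d = d ∧ y < d ∧ ¬ d ≤ x ∧ ¬ x ≤ d)) :
    (∀ n : ℤ, ¬ (f ^ n) x ≤ y) ∧
    ¬ ∃ x' y' : P, orbRel f x' x ∧ orbRel f y' y ∧ x' ≤ y' := by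
  have never_le : ∀ n : ℤ, ¬ (f ^ n) x ≤ y := by
    rcases hfix with ⟨c, hc, hcx, hcy, -⟩ | ⟨d, hd, hyd, -, hxd⟩
    · exact not_zpow_apply_le_of_fixed_le hc hcx.le hcy
    · exact not_zpow_apply_le_of_le_fixed hd hyd.le hxd
  refine ⟨never_le, ?_⟩
  rintro ⟨x', y', hx, hy, hle⟩
  obtain ⟨n, hn⟩ := exists_zpow_apply_le_of_orbRel hx hy hle
  exact never_le n hn

/-- Preventing the weak order by fixed points: suppose `¬(x ≤ y)` and either (i) there
is a fixed point `c < x` incomparable to `y`, or (ii) there is a fixed point `d > y`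
incomparable to `x`. Then `¬(f^n x ≤ y)` for all `n : ℤ`, so there are no `x' ∼_f x` and
`y' ∼_f y` with `x' ≤ y'`. -/
theorem fixed_point_prevents_weakLe (f : P ≃o P) (x y : P) (hxy : ¬ x ≤ y)
    (hfix : (∃ c : P, f c = c ∧ c < x ∧ ¬ c ≤ y ∧ ¬ y ≤ c) ∨
            (∃ d : P, f d = d ∧ y < d ∧ ¬ d ≤ x ∧ ¬ x ≤ d)) :
    (∀ n : ℤ, ¬ (f ^ n) x ≤ y) ∧
    ¬ ∃ x' y' : P, orbRel f x' x ∧ orbRel f y' y ∧ x' ≤ y' :=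
  fixed_point_prevents_weakLe_general f x y hfix
end

section
/- Let P be a partial order, f an order automorphism of P, and x, y, z ∈ P such that x < z, x < f(y), f(z) < z, y < f(y), x is incomparable to f(z), and x is incomparable to y. Then for every n : ℤ with n ≠ 0, x and f^n(x) are incomparable; that is, the orbit {f^n(x) : n ∈ ℤ} is an infinite antichain and sp(x, f) = ∞. -/
variable {P : Type*} [PartialOrder P]

/-!
The orbit of `z` is decreasing and the orbit of `y` increasing. Hence for `n ≥ 1`,
`x ≤ fⁿ x` would give `x ≤ fⁿ z ≤ f z`, and for `n ≤ -1` it would give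
`x ≤ fⁿ (f y) = fⁿ⁺¹ y ≤ y`; both contradict the incomparabilities. Finally `fⁿ x ≤ x`
is equivalent to `x ≤ f⁻ⁿ x`, so it is excluded as well.
-/

namespace OrderIso

variable (f : P ≃o P)

lemma zpow_add_one_apply (n : ℤ) (a : P) : (f ^ (n + 1)) a = (f ^ n) (f a) := by
  rw [zpow_add_one]
  rfl

lemma monotone_zpow_apply_of_le_map {a : P} (h : a ≤ f a) :
    Monotone fun n : ℤ => (f ^ n) a :=
  monotone_int_of_le_succ fun n => by
    simpa only [zpow_add_one_apply] using (f ^ n).monotone h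

lemma antitone_zpow_apply_of_map_le {a : P} (h : f a ≤ a) :
    Antitone fun n : ℤ => (f ^ n) a :=
  antitone_int_of_succ_le fun n => by
    simpa only [zpow_add_one_apply] using (f ^ n).monotone h

lemma zpow_apply_le_iff_le_zpow_neg_apply (n : ℤ) (a : P) :
    (f ^ n) a ≤ a ↔ a ≤ (f ^ (-n)) a := by
  rw [← (f ^ (-n)).le_iff_le]
  simp

lemma injective_zpow_apply_of_not_le {a : P} (h : ∀ n : ℤ, n ≠ 0 → ¬ a ≤ (f ^ n) a) :
    Function.Injective fun n : ℤ => (f ^ n) a := by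
  intro m n (hmn : (f ^ m) a = (f ^ n) a)
  by_contra hne
  have hfix : (f ^ (m - n)) a = a := by
    rw [sub_eq_neg_add, zpow_add, RelIso.mul_apply, hmn]
    simp
  exact h (m - n) (sub_ne_zero.mpr hne) hfix.ge

end OrderIso

lemma spiral_eq_top_iff {f : P ≃o P} {x : P} :
    spiral f x = ⊤ ↔ ∀ m : ℕ, 1 ≤ m → ¬ (x ≤ (f ^ (m : ℤ)) x ∨ (f ^ (m : ℤ)) x ≤ x) := by
  rw [spiral, sInf_eq_top, Set.forall_mem_image]
  simp

theorem not_le_zpow_apply_of_M_configuration {f : P ≃o P} {x y z : P}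
    (hxz : x ≤ z) (hxfy : x ≤ f y) (hfz : f z ≤ z) (hyfy : y ≤ f y)
    (hxfz : ¬ x ≤ f z) (hxy : ¬ x ≤ y) {n : ℤ} (hn : n ≠ 0) : ¬ x ≤ (f ^ n) x := by
  intro h
  rcases hn.lt_or_gt with hneg | hpos
  · apply hxy
    calc x ≤ (f ^ n) x := h
      _ ≤ (f ^ n) (f y) := (f ^ n).monotone hxfy
      _ = (f ^ (n + 1)) y := (f.zpow_add_one_apply n y).symm
      _ ≤ (f ^ (0 : ℤ)) y := f.monotone_zpow_apply_of_le_map hyfy (by omega)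
      _ = y := by simp
  · apply hxfz
    calc x ≤ (f ^ n) x := h
      _ ≤ (f ^ n) z := (f ^ n).monotone hxz
      _ ≤ (f ^ (1 : ℤ)) z := f.antitone_zpow_apply_of_map_le hfz (by omega)
      _ = f z := by simp

/-- "M" configurations force infinite spiral length: if `x < z`, `x < f y`, `f z < z`,
`y < f y`, `x` is incomparable to `f z`, and `x` is incomparable to `y`, then `x` is
incomparable to `f^n x` for every `n ≠ 0`; that is, the orbit `{f^n x : n ∈ ℤ}` is an
infinite antichain and `sp(x, f) = ∞`. -/
theorem M_configuration_forces_infinite_spiral (f : P ≃o P) (x y z : P)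
    (hxz : x < z) (hxfy : x < f y) (hfz : f z < z) (hyfy : y < f y)
    (hxfz : ¬ x ≤ f z ∧ ¬ f z ≤ x) (hxy : ¬ x ≤ y ∧ ¬ y ≤ x) :
    (∀ n : ℤ, n ≠ 0 → ¬ x ≤ (f ^ n) x ∧ ¬ (f ^ n) x ≤ x) ∧
    Function.Injective (fun n : ℤ => (f ^ n) x) ∧
    spiral f x = ⊤ := by
  have hnot_le : ∀ n : ℤ, n ≠ 0 → ¬ x ≤ (f ^ n) x := fun _ hn =>
    not_le_zpow_apply_of_M_configuration hxz.le hxfy.le hfz.le hyfy.le hxfz.1 hxy.1 hn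
  have hincomp : ∀ n : ℤ, n ≠ 0 → ¬ x ≤ (f ^ n) x ∧ ¬ (f ^ n) x ≤ x := fun n hn =>
    ⟨hnot_le n hn, by
      rw [f.zpow_apply_le_iff_le_zpow_neg_apply]
      exact hnot_le (-n) (neg_ne_zero.mpr hn)⟩
  refine ⟨hincomp, f.injective_zpow_apply_of_not_le hnot_le, spiral_eq_top_iff.mpr ?_⟩
  intro m hm
  exact not_or.mpr (hincomp m (by omega))
end

section
/- Let P be a partial order, f an order automorphism of P, x ∈ P, and F ⊆ P a finite set disjoint from the orbit {f^i(x) : i ∈ ℤ}. Then for every M : ℕ there exists k : ℤ with k ≥ M such that the set of n : ℤ with n ≠ 0 and such that for all y ∈ F, (f^k(x) < y ↔ f^{k+n}(x) < y) and (y < f^k(x) ↔ y < f^{k+n}(x)), is infinite; and likewise there exists k : ℤ with k ≤ −M with the same property. -/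
/-! Pigeonhole: over a finite `F` the quantifier-free type of `f^i x` takes finitely many values,
so on any infinite set of indices some value is taken infinitely often; any `k` in that fibre
returns to its own type at infinitely many shifts `n`. -/

variable {P : Type*} [PartialOrder P]

def qfType (F : Set P) (u : P) : F → Prop × Prop :=
  fun y => (u < y, y < u)

theorem qfType_eq_qfType_iff {F : Set P} {u u' : P} :
    qfType F u = qfType F u' ↔ ∀ y ∈ F, (u < y ↔ u' < y) ∧ (y < u ↔ y < u') := by
  simp only [qfType, funext_iff, Prod.ext_iff, eq_iff_iff, Subtype.forall]

theorem Set.Infinite.exists_infinite_inter_preimage_singleton {α β : Type*} [Finite β]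
    {s : Set α} (hs : s.Infinite) (τ : α → β) : ∃ b, (s ∩ τ ⁻¹' {b}).Infinite := by
  by_contra! h
  exact hs ((Set.finite_iUnion h).subset fun a ha => Set.mem_iUnion.2 ⟨τ a, ha, rfl⟩)

theorem Set.Infinite.exists_infinite_setOf_map_add_eq {G β : Type*} [AddGroup G] [Finite β]
    {s : Set G} (hs : s.Infinite) (τ : G → β) :
    ∃ k ∈ s, {n : G | n ≠ 0 ∧ τ k = τ (k + n)}.Infinite := by
  obtain ⟨b, hb⟩ := hs.exists_infinite_inter_preimage_singleton τ
  obtain ⟨k, hks, hkb⟩ := hb.nonempty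
  refine ⟨k, hks, ?_⟩
  -- the other points `m` of the fiber through `k` give the returns `n = -k + m`
  refine ((hb.sdiff (Set.finite_singleton k)).image (add_right_injective (-k)).injOn).mono ?_
  rintro _ ⟨m, ⟨⟨-, hmb⟩, hmk⟩, rfl⟩
  refine ⟨fun h => hmk (neg_add_eq_zero.mp h).symm, ?_⟩
  rw [add_neg_cancel_left, hkb, hmb]

theorem infinitely_many_same_qftp_general (f : P ≃o P) (x : P) (F : Finset P) :
    ∀ M : ℕ,
      (∃ k : ℤ, (M : ℤ) ≤ k ∧
        {n : ℤ | n ≠ 0 ∧ ∀ y ∈ F,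
          ((f ^ k) x < y ↔ (f ^ (k + n)) x < y) ∧
          (y < (f ^ k) x ↔ y < (f ^ (k + n)) x)}.Infinite) ∧
      (∃ k : ℤ, k ≤ -(M : ℤ) ∧
        {n : ℤ | n ≠ 0 ∧ ∀ y ∈ F,
          ((f ^ k) x < y ↔ (f ^ (k + n)) x < y) ∧
          (y < (f ^ k) x ↔ y < (f ^ (k + n)) x)}.Infinite) := by
  have key : ∀ s : Set ℤ, s.Infinite → ∃ k ∈ s, {n : ℤ | n ≠ 0 ∧ ∀ y ∈ F,
      ((f ^ k) x < y ↔ (f ^ (k + n)) x < y) ∧ (y < (f ^ k) x ↔ y < (f ^ (k + n)) x)}.Infinite :=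
    fun s hs => by
      simpa only [qfType_eq_qfType_iff, Finset.mem_coe] using
        hs.exists_infinite_setOf_map_add_eq fun i => qfType (F : Set P) ((f ^ i) x)
  exact fun M => ⟨key _ (Set.Ici_infinite _), key _ (Set.Iic_infinite _)⟩

/-- Pigeonhole for quantifier-free order types over a finite set: if `F` is finite and
disjoint from the orbit of `x`, then for every `M` there is `k ≥ M` (and likewise
`k ≤ −M`) such that infinitely many `n ≠ 0` satisfy that `f^k x` and `f^{k+n} x` have
the same quantifier-free order type over `F`. -/
theorem infinitely_many_same_qftp (f : P ≃o P) (x : P) (F : Finset P)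
    (hdisj : ∀ y ∈ F, ∀ i : ℤ, (f ^ i) x ≠ y) :
    ∀ M : ℕ,
      (∃ k : ℤ, (M : ℤ) ≤ k ∧
        {n : ℤ | n ≠ 0 ∧ ∀ y ∈ F,
          ((f ^ k) x < y ↔ (f ^ (k + n)) x < y) ∧
          (y < (f ^ k) x ↔ y < (f ^ (k + n)) x)}.Infinite) ∧
      (∃ k : ℤ, k ≤ -(M : ℤ) ∧
        {n : ℤ | n ≠ 0 ∧ ∀ y ∈ F,
          ((f ^ k) x < y ↔ (f ^ (k + n)) x < y) ∧
          (y < (f ^ k) x ↔ y < (f ^ (k + n)) x)}.Infinite) :=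
  infinitely_many_same_qftp_general f x F
end

section
/- Let P be a partial order, f an order automorphism of P, x ∈ P, F ⊆ P a finite set disjoint from the orbit {f^i(x) : i ∈ ℤ}, and n ≥ 1. Suppose there exist α, β ∈ P such that: parity(α, f) = +1 and parity(β, f) = −1; sp(α, f) = sp(β, f) = n; α < x < β; and for each integer i with 0 ≤ i ≤ n and each y ∈ F, the points f^i(α), f^i(β), and f^i(x) all have the same quantifier-free order type over F (i.e. for all y ∈ F: y < f^i(α) ↔ y < f^i(x) ↔ y < f^i(β), and f^i(α) < y ↔ f^i(x) < y ↔ f^i(β) < y). Then for every y ∈ F, every integer i ≥ 0, and every integer k ≥ 0: (y ≤ f^i(x) ↔ y ≤ f^{i+kn}(x)) and (f^i(x) ≤ y ↔ f^{i+kn}(x) ≤ y); that is, the sequences i ↦ (y ≤ f^i(x)) for i ≥ 0 and i ↦ (f^i(x) ≤ y) for i ≥ 0 are n-periodic. -/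
/-!
Write `aᵢ = fⁱ α`, `xᵢ = fⁱ x`, `bᵢ = fⁱ β`. Since `a₀ < aₙ` and `bₙ < b₀`, the intervals
`[aᵢ, bᵢ]` shrink along `i ↦ i + n`, so the property "no point of `F` separates `aᵢ` from `bᵢ`",
known for `i ≤ n`, propagates to every `i`. Both `xᵢ` and `xᵢ₊ₙ` lie in `[aᵢ, bᵢ]`, hence they
have the same cut over `F`; as `F` misses the orbit of `x`, non-strict and strict comparisons agree.
-/

variable {P : Type*} [PartialOrder P]

open Function Set

/-- For `a ≤ b`, this says that `a` and `b` have the same quantifier-free type over `F`. -/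
def CutsAlike (F : Set P) (a b : P) : Prop :=
  ∀ y ∈ F, (y < b → y < a) ∧ (a < y → b < y)

namespace CutsAlike

variable {F : Set P} {a b a' b' u v y : P}

theorem mono (h : CutsAlike F a b) (ha : a ≤ a') (hb : b' ≤ b) : CutsAlike F a' b' :=
  fun y hy => ⟨fun hyb => ((h y hy).1 (hyb.trans_le hb)).trans_le ha,
    fun hay => hb.trans_lt ((h y hy).2 (ha.trans_lt hay))⟩

theorem lt_imp_lt (h : CutsAlike F a b) (hy : y ∈ F) (hu : u ∈ Icc a b) (hv : v ∈ Icc a b) :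
    y < u → y < v :=
  fun hyu => ((h y hy).1 (hyu.trans_le hu.2)).trans_le hv.1

theorem gt_imp_gt (h : CutsAlike F a b) (hy : y ∈ F) (hu : u ∈ Icc a b) (hv : v ∈ Icc a b) :
    u < y → v < y :=
  fun huy => hv.2.trans_lt ((h y hy).2 (hu.1.trans_lt huy))

theorem lt_iff_lt (h : CutsAlike F a b) (hy : y ∈ F) (hu : u ∈ Icc a b) (hv : v ∈ Icc a b) :
    y < u ↔ y < v :=
  ⟨h.lt_imp_lt hy hu hv, h.lt_imp_lt hy hv hu⟩

theorem gt_iff_gt (h : CutsAlike F a b) (hy : y ∈ F) (hu : u ∈ Icc a b) (hv : v ∈ Icc a b) :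
    u < y ↔ v < y :=
  ⟨h.gt_imp_gt hy hu hv, h.gt_imp_gt hy hv hu⟩

end CutsAlike

section Iterates

variable {f : P ≃o P} {n : ℕ} {a b x : P}

theorem lt_pow_apply_of_parity_eq_one (hp : parity f a = 1) (hs : spiral f a = n) :
    a < (f ^ n) a := by
  unfold parity at hp
  split_ifs at hp with h
  · obtain ⟨m, hm, hlt⟩ := h
    obtain rfl : m = n := by exact_mod_cast hm.symm.trans hs
    simpa using hlt
  · omega

theorem pow_apply_lt_of_parity_eq_neg_one (hp : parity f b = -1) (hs : spiral f b = n) :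
    (f ^ n) b < b := by
  unfold parity at hp
  split_ifs at hp with _ h
  obtain ⟨m, hm, hlt⟩ := h
  obtain rfl : m = n := by exact_mod_cast hm.symm.trans hs
  simpa using hlt

theorem pow_apply_mem_Icc (ha : a ≤ (f ^ n) a) (hb : (f ^ n) b ≤ b) (hx : x ∈ Icc a b) :
    (f ^ n) x ∈ Icc a b :=
  ⟨ha.trans ((f ^ n).monotone hx.1), ((f ^ n).monotone hx.2).trans hb⟩

theorem cutsAlike_pow_apply {F : Set P} (hn : 0 < n) (ha : a ≤ (f ^ n) a) (hb : (f ^ n) b ≤ b)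
    (h : ∀ i ≤ n, CutsAlike F ((f ^ i) a) ((f ^ i) b)) (i : ℕ) :
    CutsAlike F ((f ^ i) a) ((f ^ i) b) := by
  induction i using Nat.strong_induction_on with
  | _ i ih =>
    rcases le_or_gt i n with hi | hi
    · exact h i hi
    obtain ⟨j, rfl⟩ : ∃ j, i = j + n := ⟨i - n, by omega⟩
    rw [pow_add, RelIso.mul_apply, RelIso.mul_apply]
    exact (ih j (by omega)).mono ((f ^ j).monotone ha) ((f ^ j).monotone hb)

theorem periodic_lt_pow_apply {F : Set P} (ha : a ≤ (f ^ n) a) (hb : (f ^ n) b ≤ b)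
    (hcut : ∀ i : ℕ, CutsAlike F ((f ^ i) a) ((f ^ i) b)) (hx : x ∈ Icc a b) {y : P}
    (hy : y ∈ F) :
    Periodic (fun i : ℕ => y < (f ^ i) x) n ∧ Periodic (fun i : ℕ => (f ^ i) x < y) n := by
  have mem : ∀ i : ℕ, ∀ z ∈ Icc a b, (f ^ i) z ∈ Icc ((f ^ i) a) ((f ^ i) b) :=
    fun i z hz => ⟨(f ^ i).monotone hz.1, (f ^ i).monotone hz.2⟩
  have hxi (i : ℕ) := mem i x hx
  have hxin (i : ℕ) : (f ^ (i + n)) x ∈ Icc ((f ^ i) a) ((f ^ i) b) := by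
    rw [pow_add, RelIso.mul_apply]
    exact mem i _ (pow_apply_mem_Icc ha hb hx)
  exact ⟨fun i => propext ((hcut i).lt_iff_lt hy (hxin i) (hxi i)),
    fun i => propext ((hcut i).gt_iff_gt hy (hxin i) (hxi i))⟩

end Iterates

/-- Tightening spirals force periodicity: let `F` be finite and disjoint from the orbit
of `x`, `n ≥ 1`, and suppose `α, β` have parities `+1, −1` and spiral length `n`, with
`α < x < β`, such that for `0 ≤ i ≤ n` the points `f^i α`, `f^i β`, `f^i x` have the
same quantifier-free order type over `F`. Then for all `y ∈ F` and `i, k ≥ 0`,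
`y ≤ f^i x ↔ y ≤ f^{i+kn} x` and `f^i x ≤ y ↔ f^{i+kn} x ≤ y`; i.e. the sequences
`i ↦ (y ≤ f^i x)` and `i ↦ (f^i x ≤ y)` (for `i ≥ 0`) are `n`-periodic. -/
theorem tightening_spirals (f : P ≃o P) (x : P) (F : Finset P)
    (hdisj : ∀ y ∈ F, ∀ i : ℤ, (f ^ i) x ≠ y)
    (n : ℕ) (hn : 1 ≤ n) (α β : P)
    (hpα : parity f α = 1) (hpβ : parity f β = -1)
    (hsα : spiral f α = (n : ℕ∞)) (hsβ : spiral f β = (n : ℕ∞))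
    (hαx : α < x) (hxβ : x < β)
    (htp : ∀ i : ℕ, i ≤ n → ∀ y ∈ F,
      ((y < (f ^ (i : ℤ)) α ↔ y < (f ^ (i : ℤ)) x) ∧
        (y < (f ^ (i : ℤ)) x ↔ y < (f ^ (i : ℤ)) β)) ∧
      (((f ^ (i : ℤ)) α < y ↔ (f ^ (i : ℤ)) x < y) ∧
        ((f ^ (i : ℤ)) x < y ↔ (f ^ (i : ℤ)) β < y))) :
    ∀ y ∈ F, ∀ i : ℕ, ∀ k : ℕ,
      (y ≤ (f ^ (i : ℤ)) x ↔ y ≤ (f ^ ((i : ℤ) + (k : ℤ) * (n : ℤ))) x) ∧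
      ((f ^ (i : ℤ)) x ≤ y ↔ (f ^ ((i : ℤ) + (k : ℤ) * (n : ℤ))) x ≤ y) := by
  simp only [zpow_natCast] at htp hdisj
  have hα := (lt_pow_apply_of_parity_eq_one hpα hsα).le
  have hβ := (pow_apply_lt_of_parity_eq_neg_one hpβ hsβ).le
  have hcut : ∀ i ≤ n, CutsAlike F ((f ^ i) α) ((f ^ i) β) := fun i hi y hy =>
    have ⟨⟨hlt_αx, hlt_xβ⟩, ⟨hgt_αx, hgt_xβ⟩⟩ := htp i hi y hy
    ⟨fun h => hlt_αx.2 (hlt_xβ.2 h), fun h => hgt_xβ.1 (hgt_αx.1 h)⟩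
  intro y hy i k
  have ⟨hlt, hgt⟩ := periodic_lt_pow_apply hα hβ (cutsAlike_pow_apply hn hα hβ hcut)
    ⟨hαx.le, hxβ.le⟩ hy
  have hne (j : ℕ) : (f ^ j) x ≠ y := by exact_mod_cast hdisj y hy j
  rw [show (i : ℤ) + k * n = ((i + k * n : ℕ) : ℤ) by push_cast; rfl, zpow_natCast, zpow_natCast,
    (hne i).le_iff_lt, (hne _).le_iff_lt, (hne i).symm.le_iff_lt, (hne _).symm.le_iff_lt]
  exact ⟨Iff.of_eq (hlt.nat_mul k i).symm, Iff.of_eq (hgt.nat_mul k i).symm⟩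
end

section
/- Let P be a partial order satisfying the one-point extension property. Then for every finite partial order Q, every subset A ⊆ Q, and every order embedding φ : A ↪ P (with respect to the order induced from Q), there exists an order embedding ψ : Q ↪ P whose restriction to A equals φ. -/
/-!
Extend `φ` one point at a time. To add a point `q ∉ A`, apply the one-point extension property to
the images of the points of `A` below `q`, above `q`, and incomparable to `q`: the resulting `z`
stands to `φ '' A` exactly as `q` stands to `A`, so sending `q` to `z` is again an embedding.
Since `Q` is finite, the domain can only grow finitely often.
-/

/-- A partial order `P` satisfies the one-point extension property if for all finite
subsets `A, B, C` with `a < b` for `a ∈ A`, `b ∈ B`, no `c ∈ C` below any `a ∈ A`, and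
no `b ∈ B` below any `c ∈ C`, there is a point `z` strictly above every `a ∈ A`,
strictly below every `b ∈ B`, and incomparable to every `c ∈ C`. -/
def OnePointExt (P : Type*) [PartialOrder P] : Prop :=
  ∀ A B C : Finset P,
    (∀ a ∈ A, ∀ b ∈ B, a < b) →
    (∀ c ∈ C, ∀ a ∈ A, ¬ c ≤ a) →
    (∀ b ∈ B, ∀ c ∈ C, ¬ b ≤ c) →
    ∃ z : P, (∀ a ∈ A, a < z) ∧ (∀ b ∈ B, z < b) ∧ (∀ c ∈ C, ¬ z ≤ c ∧ ¬ c ≤ z)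

section

variable {P Q : Type*} [PartialOrder P] [PartialOrder Q]

theorem OnePointExt.exists_realization (hP : OnePointExt P) {A : Set Q} [Finite A]
    (φ : A ↪o P) {q : Q} (hq : q ∉ A) :
    ∃ z : P, ∀ a : A, ((a : Q) ≤ q ↔ φ a ≤ z) ∧ (q ≤ (a : Q) ↔ z ≤ φ a) := by
  obtain ⟨z, hbelow, habove, hincomp⟩ := hP
    (Set.toFinite (φ '' {a | (a : Q) < q})).toFinset
    (Set.toFinite (φ '' {a | q < (a : Q)})).toFinset
    (Set.toFinite (φ '' {a | ¬ (a : Q) ≤ q ∧ ¬ q ≤ (a : Q)})).toFinset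
    (by
      simp only [Set.Finite.mem_toFinset, Set.forall_mem_image, φ.lt_iff_lt]
      exact fun a ha b hb => ha.trans hb)
    (by
      simp only [Set.Finite.mem_toFinset, Set.forall_mem_image, φ.le_iff_le]
      exact fun c hc a ha hca => hc.1 ((Subtype.coe_le_coe.2 hca).trans ha.le))
    (by
      simp only [Set.Finite.mem_toFinset, Set.forall_mem_image, φ.le_iff_le]
      exact fun b hb c hc hbc => hc.2 (hb.le.trans (Subtype.coe_le_coe.2 hbc)))
  simp only [Set.Finite.mem_toFinset, Set.forall_mem_image] at hbelow habove hincomp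
  refine ⟨z, fun a => ?_⟩
  by_cases haq : (a : Q) ≤ q <;> by_cases hqa : q ≤ (a : Q)
  · exact absurd (le_antisymm haq hqa ▸ a.2) hq
  · have hz := hbelow (lt_of_le_not_ge haq hqa)
    exact ⟨iff_of_true haq hz.le, iff_of_false hqa hz.not_ge⟩
  · have hz := habove (lt_of_le_not_ge hqa haq)
    exact ⟨iff_of_false haq hz.not_ge, iff_of_true hqa hz.le⟩
  · have hz := hincomp ⟨haq, hqa⟩
    exact ⟨iff_of_false haq hz.2, iff_of_false hqa hz.1⟩

theorem OrderEmbedding.exists_extend_insert {A : Set Q} (φ : A ↪o P) {q : Q} (hq : q ∉ A)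
    {z : P} (hz : ∀ a : A, ((a : Q) ≤ q ↔ φ a ≤ z) ∧ (q ≤ (a : Q) ↔ z ≤ φ a)) :
    ∃ ψ : ↥(insert q A) ↪o P, ∀ a : A, ψ (Set.inclusion (Set.subset_insert q A) a) = φ a := by
  classical
  let f : ↥(insert q A) → P := fun x => if h : (x : Q) ∈ A then φ ⟨x, h⟩ else z
  have hf : ∀ x y, f x ≤ f y ↔ (x : Q) ≤ y := by
    rintro ⟨x, rfl | hx⟩ ⟨y, rfl | hy⟩
    · simp
    · simpa [f, hq, hy] using (hz ⟨y, hy⟩).2.symm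
    · simpa [f, hq, hx] using (hz ⟨x, hx⟩).1.symm
    · simp [f, hx, hy]
  exact ⟨.ofMapLEIff f fun x y => (hf x y).trans Subtype.coe_le_coe, fun a => dif_pos a.2⟩

theorem OnePointExt.exists_orderEmbedding_extend (hP : OnePointExt P) [Finite Q] (A : Set Q)
    (φ : A ↪o P) : ∃ ψ : Q ↪o P, ∀ a : A, ψ a = φ a := by
  induction A using WellFoundedGT.induction with
  | _ A ih =>
    by_cases hA : A = Set.univ
    · subst hA
      exact ⟨OrderIso.Set.univ.symm.toOrderEmbedding.trans φ, fun a => rfl⟩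
    obtain ⟨q, hq⟩ := (Set.ne_univ_iff_exists_notMem A).1 hA
    obtain ⟨z, hz⟩ := hP.exists_realization φ hq
    obtain ⟨φ', hφ'⟩ := φ.exists_extend_insert hq hz
    obtain ⟨ψ, hψ⟩ := ih _ (Set.ssubset_insert hq) φ'
    exact ⟨ψ, fun a => (hψ _).trans (hφ' a)⟩

end

/-- Universal-homogeneity: if `P` has the one-point extension property, then for every
finite partial order `Q`, every subset `A ⊆ Q`, and every order embedding `φ` of `A`
(with the induced order) into `P`, there is an order embedding `ψ : Q ↪o P` whose
restriction to `A` is `φ`. -/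
theorem universal_homogeneity {P : Type*} [PartialOrder P] (hP : OnePointExt P)
    (Q : Type*) [PartialOrder Q] [Finite Q] (A : Set Q) (φ : A → P)
    (hφ : ∀ a b : A, ((a : Q) ≤ (b : Q) ↔ φ a ≤ φ b)) :
    ∃ ψ : Q ↪o P, ∀ a : A, ψ (a : Q) = φ a :=
  hP.exists_orderEmbedding_extend A (.ofMapLEIff φ fun a b => (hφ a b).symm)
end
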